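/- arXiv:1808.10409 — 9 statements merged into one kernel-verified Lean document; each statement's English description precedes it below -/
import Mathlib

section
/- If b : V × Q̃ → ℝ is a bounded bilinear form on Hilbert spaces satisfying the inf-sup condition inf_{p∈Q} sup_{v∈V} b(v,p)/(|v|·‖p‖) = m > 0 on a closed subspace Q ⊆ Q̃, and F ∈ V* vanishes on V₀ = {v ∈ V : b(v,q) = 0 for all q ∈ Q}, then there exists a unique p ∈ Q with b(v,p) = F(v) for all v ∈ V. -/
open RealInnerProductSpace

/-- existence and uniqueness for the mixed problem under an
inf-sup condition on a closed subspace `Q` and compatibility of `F`. -/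
theorem stmt0
    {V W : Type*} [NormedAddCommGroup V] [InnerProductSpace ℝ V] [CompleteSpace V]
    [NormedAddCommGroup W] [InnerProductSpace ℝ W] [CompleteSpace W]
    (b : V →L[ℝ] W →L[ℝ] ℝ) (Q : Submodule ℝ W) (hQ : IsClosed (Q : Set W))
    (m : ℝ) (hm : 0 < m)
    (hinfsup : (⨅ p : {p : W // p ∈ Q ∧ p ≠ 0}, ⨆ v : V, b v p.1 / (‖v‖ * ‖p.1‖)) = m)
    (F : V →L[ℝ] ℝ)
    (hF : ∀ v : V, (∀ q ∈ Q, b v q = 0) → F v = 0) :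
    ∃! p : W, p ∈ Q ∧ ∀ v : V, b v p = F v := by
  classical
  set d := InnerProductSpace.toDual ℝ V with hd
  set A : W →L[ℝ] V :=
    (d.symm.toContinuousLinearEquiv.toContinuousLinearMap).comp b.flip with hAdef
  have hAinner : ∀ (p : W) (v : V), ⟪A p, v⟫ = b v p := by
    intro p v
    simp [hAdef, hd, InnerProductSpace.toDual_symm_apply]
  -- pointwise bound for the sup terms
  have hbdd : ∀ p : W, p ≠ 0 → ∀ v : V, b v p / (‖v‖ * ‖p‖) ≤ ‖b.flip p‖ / ‖p‖ := by
    intro p hp v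
    rcases eq_or_ne v 0 with rfl | hv
    · simp [div_nonneg, norm_nonneg]
    · have hv' : (0:ℝ) < ‖v‖ := norm_pos_iff.mpr hv
      have hp' : (0:ℝ) < ‖p‖ := norm_pos_iff.mpr hp
      have h1 : b v p ≤ ‖b.flip p‖ * ‖v‖ := by
        calc b v p ≤ |b v p| := le_abs_self _
        _ = ‖(b.flip p) v‖ := by simp [Real.norm_eq_abs]
        _ ≤ ‖b.flip p‖ * ‖v‖ := (b.flip p).le_opNorm v
      calc b v p / (‖v‖ * ‖p‖) ≤ (‖b.flip p‖ * ‖v‖) / (‖v‖ * ‖p‖) := by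
            apply div_le_div_of_nonneg_right h1 (by positivity) |>.trans_eq rfl
      _ = ‖b.flip p‖ / ‖p‖ := by
            rw [mul_comm ‖v‖ ‖p‖, mul_div_mul_right _ _ (ne_of_gt hv')]
  -- key: bounded below on Q
  have hkey : ∀ p ∈ Q, m * ‖p‖ ≤ ‖b.flip p‖ := by
    intro p hpQ
    rcases eq_or_ne p 0 with rfl | hp
    · simp
    have hp' : (0:ℝ) < ‖p‖ := norm_pos_iff.mpr hp
    have hBddBelow : BddBelow (Set.range fun q : {p : W // p ∈ Q ∧ p ≠ 0} =>
        ⨆ v : V, b v q.1 / (‖v‖ * ‖q.1‖)) := by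
      refine ⟨0, ?_⟩
      rintro x ⟨q, rfl⟩
      have hBA : BddAbove (Set.range fun v : V => b v q.1 / (‖v‖ * ‖q.1‖)) := by
        refine ⟨‖b.flip q.1‖ / ‖q.1‖, ?_⟩
        rintro x ⟨v, rfl⟩
        exact hbdd q.1 q.2.2 v
      exact le_ciSup_of_le hBA (0 : V) (by simp)
    have h1 : m ≤ ⨆ v : V, b v p / (‖v‖ * ‖p‖) := by
      rw [← hinfsup]
      exact ciInf_le hBddBelow ⟨p, hpQ, hp⟩
    have h2 : (⨆ v : V, b v p / (‖v‖ * ‖p‖)) ≤ ‖b.flip p‖ / ‖p‖ :=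
      ciSup_le (hbdd p hp)
    have := h1.trans h2
    calc m * ‖p‖ ≤ (‖b.flip p‖ / ‖p‖) * ‖p‖ := by
          exact mul_le_mul_of_nonneg_right this (norm_nonneg _)
    _ = ‖b.flip p‖ := by field_simp
  have hAnorm : ∀ p : W, ‖A p‖ = ‖b.flip p‖ := by
    intro p
    simp [hAdef]
  -- image submodule
  set M : Submodule ℝ V := Q.map (A : W →ₗ[ℝ] V) with hMdef
  haveI : CompleteSpace Q := hQ.completeSpace_coe
  have hMclosed : IsClosed (M : Set V) := by
    have : (M : Set V) = Set.range (A.comp Q.subtypeL) := by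
      ext x
      simp [hMdef, Set.range, SetLike.exists, Subtype.exists]
    rw [this]
    have halip : AntilipschitzWith (⟨m⁻¹, by positivity⟩ : NNReal) (A.comp Q.subtypeL) := by
      refine AntilipschitzWith.of_le_mul_dist ?_
      intro x y
      have hsub : (A.comp Q.subtypeL) x - (A.comp Q.subtypeL) y = A ((x : W) - y) := by
        simp
      rw [dist_eq_norm, dist_eq_norm, hsub]
      have := hkey ((x : W) - y) (Q.sub_mem x.2 y.2)
      rw [← hAnorm] at this
      have hms : ‖(x : W) - y‖ ≤ m⁻¹ * ‖A ((x:W) - y)‖ := by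
        rw [inv_mul_eq_div, le_div_iff₀ hm, mul_comm]
        exact this
      calc ‖(x : Q) - y‖ = ‖(x : W) - y‖ := rfl
      _ ≤ m⁻¹ * ‖A ((x:W) - y)‖ := hms
      _ = (⟨m⁻¹, by positivity⟩ : NNReal) * ‖A ((x:W) - y)‖ := rfl
    exact halip.isClosed_range (A.comp Q.subtypeL).uniformContinuous
  haveI : CompleteSpace M := hMclosed.completeSpace_coe
  set f : V := d.symm F with hf
  have hfinner : ∀ v : V, ⟪f, v⟫ = F v := by
    intro v; simp [hf, hd, InnerProductSpace.toDual_symm_apply]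
  have hfM : f ∈ M := by
    rw [← Submodule.orthogonal_orthogonal M]
    rw [Submodule.mem_orthogonal]
    intro u hu
    have hb0 : ∀ q ∈ Q, b u q = 0 := by
      intro q hq
      have : A q ∈ M := Submodule.mem_map_of_mem hq
      have h := (Submodule.mem_orthogonal _ _).mp hu _ this
      rwa [hAinner] at h
    have : F u = 0 := hF u hb0
    rw [real_inner_comm, hfinner, this]
  obtain ⟨q, hqQ, hqA⟩ := hfM
  simp only [ContinuousLinearMap.coe_coe] at hqA
  refine ⟨q, ⟨hqQ, ?_⟩, ?_⟩
  · intro v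
    rw [← hAinner, hqA, hfinner]
  · rintro p' ⟨hp'Q, hp'⟩
    by_contra hne
    have hsub : p' - q ∈ Q := Q.sub_mem hp'Q hqQ
    have hzero : b.flip (p' - q) = 0 := by
      ext v
      have h1 : b v q = F v := by rw [← hAinner q v, hqA, hfinner]
      simp [hp' v, h1]
    have := hkey _ hsub
    rw [hzero] at this
    simp at this
    have hpos : (0:ℝ) < ‖p' - q‖ := norm_pos_iff.mpr (sub_ne_zero_of_ne hne)
    nlinarith
end

section
/- Let V_h ⊆ V be a finite-dimensional subspace and M_h := C⁻¹ B V_h, where C⁻¹ : Q̃* → Q̃ is the Riesz isometry and B : V → Q̃* is the operator induced by b. Then the discrete inf-sup constant satisfies inf_{p_h ∈ M_h} sup_{v_h ∈ V_h} b(v_h,p_h)/(|v_h|·‖p_h‖) ≥ inf_{w_h ∈ V_{h,0}^⊥} ‖C⁻¹ B w_h‖ / |w_h|, where V_{h,0} = {v_h ∈ V_h : b(v_h,q_h) = 0 ∀ q_h ∈ M_h} and V_{h,0}^⊥ is its orthogonal complement in V_h. -/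
open RealInnerProductSpace

/-- for the no-projection trial space `M_h = C⁻¹ B V_h`, the discrete
inf-sup constant is bounded below by `m_{h,0} = inf_{w ∈ V_{h,0}^⊥} ‖C⁻¹Bw‖/|w|`. -/
theorem stmt2
    {V W : Type*} [NormedAddCommGroup V] [InnerProductSpace ℝ V] [CompleteSpace V]
    [NormedAddCommGroup W] [InnerProductSpace ℝ W] [CompleteSpace W]
    (b : V →L[ℝ] W →L[ℝ] ℝ)
    (Vh : Submodule ℝ V) [FiniteDimensional ℝ Vh]
    (CB : V → W) (hCB : ∀ v : V, ∀ q : W, ⟪CB v, q⟫ = b v q)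
    (Mh : Set W) (hMh : Mh = CB '' (Vh : Set V))
    (Vh0 : Set V) (hVh0 : Vh0 = {v : V | v ∈ Vh ∧ ∀ q ∈ Mh, b v q = 0})
    (Vh0perp : Set V)
    (hperp : Vh0perp = {w : V | w ∈ Vh ∧ ∀ v ∈ Vh0, ⟪w, v⟫ = 0}) :
    (⨅ w : {w : V // w ∈ Vh0perp ∧ w ≠ 0}, ‖CB w.1‖ / ‖w.1‖) ≤
      ⨅ p : {p : W // p ∈ Mh ∧ p ≠ 0},
        ⨆ v : {v : V // v ∈ Vh}, b v.1 p.1 / (‖v.1‖ * ‖p.1‖) := by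
  by_cases hne : Nonempty {p : W // p ∈ Mh ∧ p ≠ 0}
  · apply le_ciInf
    rintro ⟨p, hpM, hp0⟩
    obtain ⟨u, huVh, hup⟩ : ∃ u ∈ Vh, CB u = p := by
      rw [hMh] at hpM; exact hpM
    -- the subspace Vh0 viewed inside Vh
    let S : Submodule ℝ Vh :=
      { carrier := {x : Vh | (x : V) ∈ Vh0}
        add_mem' := by
          intro x y hx hy
          have hx' : (x : V) ∈ Vh0 := hx
          have hy' : (y : V) ∈ Vh0 := hy
          rw [hVh0] at hx' hy'
          have : ((x : V) + (y : V)) ∈ Vh0 := by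
            rw [hVh0]
            refine ⟨Vh.add_mem x.2 y.2, fun q hq => ?_⟩
            rw [map_add, ContinuousLinearMap.add_apply, hx'.2 q hq, hy'.2 q hq, add_zero]
          simpa using this
        zero_mem' := by
          have : (0 : V) ∈ Vh0 := by
            rw [hVh0]; exact ⟨Vh.zero_mem, fun q hq => by simp⟩
          simpa using this
        smul_mem' := by
          intro c x hx
          have hx' : (x : V) ∈ Vh0 := hx
          rw [hVh0] at hx'
          have : (c • (x : V)) ∈ Vh0 := by
            rw [hVh0]
            refine ⟨Vh.smul_mem c x.2, fun q hq => ?_⟩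
            rw [map_smul, ContinuousLinearMap.smul_apply, hx'.2 q hq, smul_zero]
          simpa using this }
    obtain ⟨y, hyS, z, hz, hyz⟩ := S.exists_add_mem_mem_orthogonal (⟨u, huVh⟩ : Vh)
    have hyVh0 : (y : V) ∈ Vh0 := hyS
    set w₀ : V := (z : V) with hw₀
    have hw₀Vh : w₀ ∈ Vh := z.2
    have hsplit : u = (y : V) + w₀ := by
      have := congrArg (fun x : Vh => (x : V)) hyz
      simpa using this
    -- b y q = 0 for q ∈ Mh
    have hy0 : ∀ q ∈ Mh, b (y : V) q = 0 := by
      rw [hVh0] at hyVh0; exact hyVh0.2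
    have hCBw₀Mh : CB w₀ ∈ Mh := by rw [hMh]; exact ⟨w₀, hw₀Vh, rfl⟩
    -- key identity: b w₀ p = ‖p‖ ^ 2
    have hbu : ∀ q : W, b u q = b (y : V) q + b w₀ q := by
      intro q
      rw [hsplit, map_add, ContinuousLinearMap.add_apply]
    have hkey : b w₀ p = ‖p‖ ^ 2 := by
      have h1 : b u p = b w₀ p := by rw [hbu p, hy0 p hpM, zero_add]
      have h2 : b u p = ‖p‖ ^ 2 := by
        rw [← hCB, hup, real_inner_self_eq_norm_sq]
      rw [← h1, h2]
    have hnormCBw₀ : ‖CB w₀‖ = ‖p‖ := by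
      have h1 : ‖CB w₀‖ ^ 2 = ‖p‖ ^ 2 := by
        rw [← real_inner_self_eq_norm_sq, hCB]
        have : b u (CB w₀) = b w₀ (CB w₀) := by
          rw [hbu, hy0 _ hCBw₀Mh, zero_add]
        rw [← this, ← hCB, hup, real_inner_comm, hCB, hkey]
      rw [← Real.sqrt_sq (norm_nonneg (CB w₀)), h1, Real.sqrt_sq (norm_nonneg p)]
    have hpnorm : (0 : ℝ) < ‖p‖ := norm_pos_iff.mpr hp0
    have hw₀ne : w₀ ≠ 0 := by
      intro h
      have : b w₀ p = 0 := by rw [h, map_zero, ContinuousLinearMap.zero_apply]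
      rw [hkey] at this
      exact absurd this (by positivity)
    have hw₀norm : (0 : ℝ) < ‖w₀‖ := norm_pos_iff.mpr hw₀ne
    have hw₀perp : w₀ ∈ Vh0perp := by
      rw [hperp]
      refine ⟨hw₀Vh, fun v hv => ?_⟩
      have hvVh : v ∈ Vh := by rw [hVh0] at hv; exact hv.1
      have := hz ⟨v, hvVh⟩ (by exact hv)
      rw [Submodule.coe_inner] at this
      rw [real_inner_comm]
      exact this
    -- first inequality: the infimum is at most the value at w₀
    have step1 : (⨅ w : {w : V // w ∈ Vh0perp ∧ w ≠ 0}, ‖CB w.1‖ / ‖w.1‖) ≤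
        ‖CB w₀‖ / ‖w₀‖ := by
      refine ciInf_le ⟨0, ?_⟩ (⟨w₀, hw₀perp, hw₀ne⟩ : {w : V // w ∈ Vh0perp ∧ w ≠ 0})
      rintro x ⟨w, rfl⟩
      positivity
    refine step1.trans ?_
    -- second inequality: value at w₀ is at most the sup
    have hval : ‖CB w₀‖ / ‖w₀‖ = b w₀ p / (‖w₀‖ * ‖p‖) := by
      rw [hnormCBw₀, hkey]
      field_simp
    rw [hval]
    refine le_ciSup_of_le ⟨‖b‖, ?_⟩ (⟨w₀, hw₀Vh⟩ : {v : V // v ∈ Vh}) le_rfl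
    rintro x ⟨⟨v, hv⟩, rfl⟩
    simp only
    rcases eq_or_lt_of_le (norm_nonneg v) with hv0 | hv0
    · have : v = 0 := by rw [← norm_eq_zero]; exact hv0.symm
      simp [this, ContinuousLinearMap.opNorm_nonneg]
    · rw [div_le_iff₀ (by positivity)]
      calc b v p ≤ |b v p| := le_abs_self _
        _ = ‖b v p‖ := rfl
        _ ≤ ‖b‖ * ‖v‖ * ‖p‖ := b.le_opNorm₂ v p
        _ = ‖b‖ * (‖v‖ * ‖p‖) := by ring
  · -- both index types are empty
    have h1 : IsEmpty {p : W // p ∈ Mh ∧ p ≠ 0} := not_nonempty_iff.mp hne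
    have h2 : IsEmpty {w : V // w ∈ Vh0perp ∧ w ≠ 0} := by
      constructor
      rintro ⟨w, hwperp, hwne⟩
      rw [hperp] at hwperp
      have hwVh0 : w ∈ Vh0 := by
        rw [hVh0]
        refine ⟨hwperp.1, fun q hq => ?_⟩
        have : q = 0 := by
          by_contra hq0
          exact hne ⟨⟨q, hq, hq0⟩⟩
        simp [this]
      have : ⟪w, w⟫ = (0 : ℝ) := hwperp.2 w hwVh0
      exact hwne (inner_self_eq_zero.mp this)
    rw [Real.iInf_of_isEmpty, Real.iInf_of_isEmpty]
end

section
/- With M_h := C⁻¹ B V_h for a finite-dimensional V_h ⊆ V, if p solves b(v,p) = F(v) for all v ∈ V and p_h ∈ M_h solves b(v_h,p_h) = F(v_h) for all v_h ∈ V_h, then p_h is the orthogonal projection of p onto M_h; in particular ‖p − p_h‖ = inf_{q_h ∈ M_h} ‖p − q_h‖. -/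
open RealInnerProductSpace

/-- with `M_h = C⁻¹ B V_h`, the discrete solution `p_h` is the
orthogonal projection of `p` onto `M_h`, hence the error is best-approximation. -/
theorem stmt3
    {V W : Type*} [NormedAddCommGroup V] [InnerProductSpace ℝ V] [CompleteSpace V]
    [NormedAddCommGroup W] [InnerProductSpace ℝ W] [CompleteSpace W]
    (b : V →L[ℝ] W →L[ℝ] ℝ)
    (Vh : Submodule ℝ V) [FiniteDimensional ℝ Vh]
    (CB : V → W) (hCB : ∀ v : V, ∀ q : W, ⟪CB v, q⟫ = b v q)
    (Mh : Set W) (hMh : Mh = CB '' (Vh : Set V))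
    (F : V →L[ℝ] ℝ)
    (p : W) (hp : ∀ v : V, b v p = F v)
    (ph : W) (hphMh : ph ∈ Mh) (hph : ∀ v ∈ Vh, b v ph = F v) :
    (∀ q ∈ Mh, ⟪p - ph, q⟫ = 0) ∧
      ‖p - ph‖ = ⨅ q : {q : W // q ∈ Mh}, ‖p - q.1‖ := by
  have h1 : ∀ q ∈ Mh, ⟪p - ph, q⟫ = 0 := by
    intro q hq
    rw [hMh] at hq
    obtain ⟨v, hv, rfl⟩ := hq
    rw [inner_sub_left, real_inner_comm (CB v) p, real_inner_comm (CB v) ph, hCB, hCB, hp, hph v hv]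
    ring
  refine ⟨h1, ?_⟩
  have hne : Nonempty {q : W // q ∈ Mh} := ⟨⟨ph, hphMh⟩⟩
  apply le_antisymm
  · apply le_ciInf
    rintro ⟨q, hq⟩
    have horth : ⟪p - ph, ph - q⟫ = 0 := by
      rw [inner_sub_right, h1 ph hphMh, h1 q hq]; ring
    have hsq : ‖p - q‖ ^ 2 = ‖p - ph‖ ^ 2 + ‖ph - q‖ ^ 2 := by
      have : p - q = (p - ph) + (ph - q) := by abel
      rw [this, norm_add_sq_real, horth]; ring
    nlinarith [norm_nonneg (p - q), norm_nonneg (p - ph), norm_nonneg (ph - q)]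
  · have hbdd : BddBelow (Set.range fun q : {q : W // q ∈ Mh} => ‖p - q.1‖) :=
      ⟨0, by rintro x ⟨q, rfl⟩; exact norm_nonneg _⟩
    exact ciInf_le hbdd ⟨ph, hphMh⟩
end

section
/- Let M̃_h be a finite-dimensional subspace of Q̃ with an inner product (·,·)_h, and let R_h : Q̃ → M̃_h be defined by (R_h p, q_h)_h = (p, q_h)_{Q̃} for all q_h ∈ M̃_h. If ‖R_h q_h‖_h ≥ c̃ ‖q_h‖ for all q_h ∈ C⁻¹BV_h with c̃ > 0, then the kernel V_{h,0} = {v_h ∈ V_h : b(v_h, q_h) = 0 ∀ q_h ∈ R_h C⁻¹ B V_h} is contained in the continuous kernel V₀ = ker B. -/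
open RealInnerProductSpace

/-- under the projection coercivity condition
`‖R_h q_h‖_h ≥ c̃ ‖q_h‖` on `C⁻¹BV_h`, the discrete kernel (with respect to the
projection-type trial space `M_h = R_h C⁻¹ B V_h`) is contained in `ker B`.
The space `M̃_h` with its inner product `(·,·)_h` is modeled as a finite-dimensional
inner product space `Mt` embedded in `Q̃ = W` by an injective linear map `j`. -/
theorem stmt4
    {V W Mt : Type*} [NormedAddCommGroup V] [InnerProductSpace ℝ V] [CompleteSpace V]
    [NormedAddCommGroup W] [InnerProductSpace ℝ W] [CompleteSpace W]
    [NormedAddCommGroup Mt] [InnerProductSpace ℝ Mt] [FiniteDimensional ℝ Mt]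
    (b : V →L[ℝ] W →L[ℝ] ℝ)
    (j : Mt →ₗ[ℝ] W) (hj : Function.Injective j)
    (CB : V → W) (hCB : ∀ v : V, ∀ q : W, ⟪CB v, q⟫ = b v q)
    (Rh : W → Mt) (hRh : ∀ p : W, ∀ qh : Mt, ⟪Rh p, qh⟫ = ⟪p, j qh⟫)
    (Vh : Submodule ℝ V) [FiniteDimensional ℝ Vh]
    (c : ℝ) (hc : 0 < c)
    (hcoer : ∀ v ∈ Vh, c * ‖CB v‖ ≤ ‖Rh (CB v)‖)
    (vh : V) (hvh : vh ∈ Vh)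
    (hker : ∀ u ∈ Vh, b vh (j (Rh (CB u))) = 0) :
    ∀ q : W, b vh q = 0 := by
  have h1 : ⟪Rh (CB vh), Rh (CB vh)⟫ = 0 := by
    rw [hRh, hCB]; exact hker vh hvh
  have h2 : Rh (CB vh) = 0 := by
    simpa using inner_self_eq_zero.mp h1
  have h3 : ‖CB vh‖ = 0 := by
    have := hcoer vh hvh
    rw [h2, norm_zero] at this
    nlinarith [norm_nonneg (CB vh)]
  have h4 : CB vh = 0 := norm_eq_zero.mp h3
  intro q
  rw [← hCB, h4, inner_zero_left]
end

section
/- Under the projection coercivity assumption ‖R_h q_h‖_h ≥ c̃ ‖q_h‖ for all q_h ∈ C⁻¹BV_h, the discrete inf-sup constant for the pair (V_h, R_h C⁻¹ B V_h) with trial norm ‖·‖_h satisfies m_h ≥ c̃ · m_{h,0}, where m_{h,0} = inf_{w_h ∈ V_{h,0}^⊥} ‖C⁻¹Bw_h‖/|w_h| is the inf-sup constant of the no-projection pair (V_h, C⁻¹BV_h). In particular, uniform stability of {(V_h, C⁻¹BV_h)} implies uniform stability of {(V_h, R_h C⁻¹ B V_h)}. -/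
/-!
Put `K v := R_h (C⁻¹B v)`. The identity `⟪K v, q_h⟫ = b(v, q_h)` makes `K` linear and identifies
`V_{h,0}` with `V_h ∩ ker K`. Every `p_h = K w ∈ M̃_h` is also `K w₁` for the component `w₁` of `w`
orthogonal to `V_{h,0}`, and testing the supremum with `v = w₁` gives
`b(w₁, p_h) / (|w₁| ‖p_h‖) = ‖K w₁‖ / |w₁| ≥ c̃ ‖C⁻¹B w₁‖ / |w₁| ≥ c̃ m_{h,0}`.
-/

open RealInnerProductSpace
open LinearMap (ker)

section Orthogonal

variable {𝕜 V F : Type*} [RCLike 𝕜] [NormedAddCommGroup V] [InnerProductSpace 𝕜 V]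
  [AddCommGroup F] [Module 𝕜 F] (K : V →ₗ[𝕜] F) {Vh : Submodule 𝕜 V} {w : V}

theorem LinearMap.exists_mem_inf_orthogonal_ker_apply_eq [FiniteDimensional 𝕜 Vh]
    (hw : w ∈ Vh) : ∃ w₁ ∈ Vh ⊓ (Vh ⊓ ker K)ᗮ, K w₁ = K w := by
  set N := Vh ⊓ ker K
  refine ⟨w - N.starProjection w, ⟨Vh.sub_mem hw ?_, N.sub_starProjection_mem_orthogonal w⟩, ?_⟩
  · exact (N.starProjection_apply_mem w).1
  · rw [map_sub, (N.starProjection_apply_mem w).2, sub_zero]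

theorem LinearMap.eq_zero_of_mem_inf_orthogonal_ker (hw : w ∈ Vh ⊓ (Vh ⊓ ker K)ᗮ)
    (hKw : K w = 0) : w = 0 := by
  have : w ∈ (Vh ⊓ ker K) ⊓ (Vh ⊓ ker K)ᗮ := ⟨⟨hw.1, hKw⟩, hw.2⟩
  rwa [Submodule.inf_orthogonal_eq_bot, Submodule.mem_bot] at this

end Orthogonal

section InnerRepresentation

variable {V F : Type*} [AddCommGroup V] [Module ℝ V] [NormedAddCommGroup F] [InnerProductSpace ℝ F]

def LinearMap.ofInnerEq (B : V →ₗ[ℝ] F →ₗ[ℝ] ℝ) (f : V → F) (hf : ∀ v q, ⟪f v, q⟫ = B v q) :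
    V →ₗ[ℝ] F where
  toFun := f
  map_add' x y := ext_inner_right ℝ fun q => by
    simp only [inner_add_left, hf, map_add, LinearMap.add_apply]
  map_smul' a x := ext_inner_right ℝ fun q => by simp [real_inner_smul_left, hf]

end InnerRepresentation

theorem ContinuousLinearMap.bddAbove_range_apply_div_norm_mul {E G : Type*}
    [SeminormedAddCommGroup E] [NormedSpace ℝ E] [SeminormedAddCommGroup G] [NormedSpace ℝ G]
    {ι : Type*} (b : E →L[ℝ] G →L[ℝ] ℝ) (v : ι → E) (q : G) {r : ℝ} (hr : 0 ≤ r) :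
    BddAbove (Set.range fun i => b (v i) q / (‖v i‖ * r)) := by
  refine ⟨‖b‖ * ‖q‖ / r, ?_⟩
  rintro _ ⟨i, rfl⟩
  dsimp only
  rw [← div_div]
  gcongr
  refine div_le_of_le_mul₀ (norm_nonneg _) (by positivity) ?_
  calc b (v i) q ≤ ‖b (v i) q‖ := Real.le_norm_self _
    _ ≤ ‖b‖ * ‖v i‖ * ‖q‖ := b.le_opNorm₂ _ _
    _ = ‖b‖ * ‖q‖ * ‖v i‖ := by ring

theorem mul_iInf_le_iInf_iSup_of_coercive {V W F E : Type*}
    [NormedAddCommGroup V] [InnerProductSpace ℝ V] [NormedAddCommGroup W] [InnerProductSpace ℝ W]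
    [NormedAddCommGroup F] [InnerProductSpace ℝ F] [SeminormedAddCommGroup E]
    (b : V →L[ℝ] W →L[ℝ] ℝ) (j : F →ₗ[ℝ] W) (K : V →ₗ[ℝ] F)
    (hK : ∀ v q, ⟪K v, q⟫ = b v (j q)) (g : V → E)
    (Vh : Submodule ℝ V) [FiniteDimensional ℝ Vh] {c : ℝ} (hc : 0 ≤ c)
    (hcoer : ∀ v ∈ Vh, c * ‖g v‖ ≤ ‖K v‖) :
    c * (⨅ w : {w : V // w ∈ Vh ⊓ (Vh ⊓ ker K)ᗮ ∧ w ≠ 0}, ‖g w.1‖ / ‖w.1‖) ≤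
      ⨅ p : {p : F // p ∈ Vh.map K ∧ p ≠ 0},
        ⨆ v : {v : V // v ∈ Vh}, b v.1 (j p.1) / (‖v.1‖ * ‖p.1‖) := by
  rcases isEmpty_or_nonempty {p : F // p ∈ Vh.map K ∧ p ≠ 0} with hempty | hne
  · -- both index types are empty and both infima take the junk value `0`
    have : IsEmpty {w : V // w ∈ Vh ⊓ (Vh ⊓ ker K)ᗮ ∧ w ≠ 0} :=
      ⟨fun ⟨w, hw, hw0⟩ => hempty.false ⟨K w, Submodule.mem_map_of_mem hw.1,
        mt (K.eq_zero_of_mem_inf_orthogonal_ker hw) hw0⟩⟩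
    simp only [Real.iInf_of_isEmpty, mul_zero, le_refl]
  refine le_ciInf fun ⟨p, hp, hp0⟩ => ?_
  obtain ⟨w, hw, rfl⟩ := Submodule.mem_map.mp hp
  obtain ⟨w₁, hw₁, hKw₁⟩ := K.exists_mem_inf_orthogonal_ker_apply_eq hw
  dsimp only
  rw [← hKw₁] at hp0 ⊢
  have hw₁0 : w₁ ≠ 0 := by rintro rfl; exact hp0 K.map_zero
  calc c * (⨅ w : {w : V // w ∈ Vh ⊓ (Vh ⊓ ker K)ᗮ ∧ w ≠ 0}, ‖g w.1‖ / ‖w.1‖)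
      ≤ c * (‖g w₁‖ / ‖w₁‖) := by
        gcongr
        exact ciInf_le ⟨0, by rintro _ ⟨w, rfl⟩; positivity⟩ (Subtype.mk w₁ ⟨hw₁, hw₁0⟩)
    _ ≤ ‖K w₁‖ / ‖w₁‖ := by rw [← mul_div_assoc]; gcongr; exact hcoer w₁ hw₁.1
    _ = b w₁ (j (K w₁)) / (‖w₁‖ * ‖K w₁‖) := by
        rw [← hK, real_inner_self_eq_norm_sq]
        field_simp [norm_ne_zero_iff.mpr hp0]
    _ ≤ ⨆ v : {v : V // v ∈ Vh}, b v.1 (j (K w₁)) / (‖v.1‖ * ‖K w₁‖) :=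
        le_ciSup (b.bddAbove_range_apply_div_norm_mul Subtype.val _ (norm_nonneg _))
          (Subtype.mk w₁ hw₁.1)

theorem stmt5_general
    {V W Mt : Type*} [NormedAddCommGroup V] [InnerProductSpace ℝ V]
    [NormedAddCommGroup W] [InnerProductSpace ℝ W]
    [NormedAddCommGroup Mt] [InnerProductSpace ℝ Mt]
    (b : V →L[ℝ] W →L[ℝ] ℝ)
    (j : Mt →ₗ[ℝ] W)
    (CB : V → W) (hCB : ∀ v : V, ∀ q : W, ⟪CB v, q⟫ = b v q)
    (Rh : W → Mt) (hRh : ∀ p : W, ∀ qh : Mt, ⟪Rh p, qh⟫ = ⟪p, j qh⟫)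
    (Vh : Submodule ℝ V) [FiniteDimensional ℝ Vh]
    (c : ℝ) (hc : 0 < c)
    (hcoer : ∀ v ∈ Vh, c * ‖CB v‖ ≤ ‖Rh (CB v)‖)
    (Mh : Set Mt) (hMh : Mh = (fun v => Rh (CB v)) '' (Vh : Set V))
    (Vh0 : Set V) (hVh0 : Vh0 = {v : V | v ∈ Vh ∧ ∀ ph ∈ Mh, b v (j ph) = 0})
    (Vh0perp : Set V)
    (hperp : Vh0perp = {w : V | w ∈ Vh ∧ ∀ v ∈ Vh0, ⟪w, v⟫ = 0}) :
    c * (⨅ w : {w : V // w ∈ Vh0perp ∧ w ≠ 0}, ‖CB w.1‖ / ‖w.1‖) ≤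
      ⨅ p : {p : Mt // p ∈ Mh ∧ p ≠ 0},
        ⨆ v : {v : V // v ∈ Vh}, b v.1 (j p.1) / (‖v.1‖ * ‖p.1‖) := by
  have hK : ∀ v q, ⟪Rh (CB v), q⟫ = b v (j q) := fun v q => by rw [hRh, hCB]
  let K := LinearMap.ofInnerEq (b.toLinearMap₁₂.compl₂ j) (fun v => Rh (CB v)) hK
  have hVh0K : Vh0 = Vh ⊓ ker K := by
    subst hVh0 hMh
    ext v
    refine ⟨fun ⟨hv, hv0⟩ => ⟨hv, ?_⟩, fun ⟨hv, hKv⟩ => ⟨hv, ?_⟩⟩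
    · exact inner_self_eq_zero (𝕜 := ℝ) |>.mp ((hK v _).trans (hv0 _ ⟨v, hv, rfl⟩))
    · rintro _ ⟨w, -, rfl⟩
      rw [← hK, show Rh (CB v) = 0 from hKv, inner_zero_left]
  have hperpK : Vh0perp = Vh ⊓ (Vh ⊓ ker K)ᗮ := by
    ext w
    simp only [hperp, hVh0K, Set.mem_ofPred_eq, SetLike.mem_coe, Submodule.mem_inf,
      Submodule.mem_orthogonal']
  subst hMh hperpK
  exact mul_iInf_le_iInf_iSup_of_coercive b j K hK CB Vh hc.le hcoer

/-- under the projection coercivity assumption, the discrete inf-sup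
constant of the projection-type pair `(V_h, R_h C⁻¹ B V_h)` (with the trial norm
`‖·‖_h`, i.e. the norm of `Mt`) is at least `c̃ · m_{h,0}`, where `m_{h,0}` is the
inf-sup constant of the no-projection pair `(V_h, C⁻¹BV_h)`. -/
theorem stmt5
    {V W Mt : Type*} [NormedAddCommGroup V] [InnerProductSpace ℝ V] [CompleteSpace V]
    [NormedAddCommGroup W] [InnerProductSpace ℝ W] [CompleteSpace W]
    [NormedAddCommGroup Mt] [InnerProductSpace ℝ Mt] [FiniteDimensional ℝ Mt]
    (b : V →L[ℝ] W →L[ℝ] ℝ)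
    (j : Mt →ₗ[ℝ] W) (hj : Function.Injective j)
    (CB : V → W) (hCB : ∀ v : V, ∀ q : W, ⟪CB v, q⟫ = b v q)
    (Rh : W → Mt) (hRh : ∀ p : W, ∀ qh : Mt, ⟪Rh p, qh⟫ = ⟪p, j qh⟫)
    (Vh : Submodule ℝ V) [FiniteDimensional ℝ Vh]
    (c : ℝ) (hc : 0 < c)
    (hcoer : ∀ v ∈ Vh, c * ‖CB v‖ ≤ ‖Rh (CB v)‖)
    (Mh : Set Mt) (hMh : Mh = (fun v => Rh (CB v)) '' (Vh : Set V))
    (Vh0 : Set V) (hVh0 : Vh0 = {v : V | v ∈ Vh ∧ ∀ ph ∈ Mh, b v (j ph) = 0})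
    (Vh0perp : Set V)
    (hperp : Vh0perp = {w : V | w ∈ Vh ∧ ∀ v ∈ Vh0, ⟪w, v⟫ = 0}) :
    c * (⨅ w : {w : V // w ∈ Vh0perp ∧ w ≠ 0}, ‖CB w.1‖ / ‖w.1‖) ≤
      ⨅ p : {p : Mt // p ∈ Mh ∧ p ≠ 0},
        ⨆ v : {v : V // v ∈ Vh}, b v.1 (j p.1) / (‖v.1‖ * ‖p.1‖) :=
  stmt5_general b j CB hCB Rh hRh Vh c hc hcoer Mh hMh Vh0 hVh0 Vh0perp hperp
end

section
/- Let p solve b(v,p) = F(v) for all v ∈ V and p_h ∈ M_h := R_h C⁻¹ B V_h solve b(v_h,p_h) = F(v_h) for all v_h ∈ V_h. Assume ‖R_h q_h‖_h ≥ c̃‖q_h‖ for all q_h ∈ C⁻¹BV_h and k₁‖q_h‖ ≤ ‖q_h‖_h for all q_h ∈ M̃_h. Then ‖p − p_h‖ ≤ (1 + 1/(c̃ k₁)) inf_{q_h ∈ M_h} ‖p − q_h‖. -/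
open RealInnerProductSpace

/-- quasi-optimal approximability of the projection-type trial space:
`‖p − p_h‖ ≤ (1 + 1/(c̃ k₁)) inf_{q_h ∈ M_h} ‖p − q_h‖`. -/
theorem stmt6
    {V W Mt : Type*} [NormedAddCommGroup V] [InnerProductSpace ℝ V] [CompleteSpace V]
    [NormedAddCommGroup W] [InnerProductSpace ℝ W] [CompleteSpace W]
    [NormedAddCommGroup Mt] [InnerProductSpace ℝ Mt] [FiniteDimensional ℝ Mt]
    (b : V →L[ℝ] W →L[ℝ] ℝ)
    (j : Mt →ₗ[ℝ] W) (hj : Function.Injective j)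
    (CB : V → W) (hCB : ∀ v : V, ∀ q : W, ⟪CB v, q⟫ = b v q)
    (Rh : W → Mt) (hRh : ∀ p : W, ∀ qh : Mt, ⟪Rh p, qh⟫ = ⟪p, j qh⟫)
    (Vh : Submodule ℝ V) [FiniteDimensional ℝ Vh]
    (c k₁ : ℝ) (hc : 0 < c) (hk₁ : 0 < k₁)
    (hcoer : ∀ v ∈ Vh, c * ‖CB v‖ ≤ ‖Rh (CB v)‖)
    (hnorm : ∀ q : Mt, k₁ * ‖j q‖ ≤ ‖q‖)
    (Mh : Set Mt) (hMh : Mh = (fun v => Rh (CB v)) '' (Vh : Set V))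
    (F : V →L[ℝ] ℝ)
    (p : W) (hp : ∀ v : V, b v p = F v)
    (ph : Mt) (hphMh : ph ∈ Mh) (hph : ∀ v ∈ Vh, b v (j ph) = F v) :
    ‖p - j ph‖ ≤ (1 + 1 / (c * k₁)) * ⨅ q : {q : Mt // q ∈ Mh}, ‖p - j q.1‖ := by
  have hC : (0:ℝ) < 1 + 1 / (c * k₁) := by positivity
  -- key pointwise estimate
  have key : ∀ q ∈ Mh, ‖p - j ph‖ ≤ (1 + 1 / (c * k₁)) * ‖p - j q‖ := by
    intro q hq
    rw [hMh] at hq hphMh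
    obtain ⟨v, hv, hvq⟩ := hq
    obtain ⟨v', hv', hv'ph⟩ := hphMh
    set w : V := v - v' with hw
    have hwVh : w ∈ Vh := sub_mem hv hv'
    -- q - ph = Rh (CB w)
    have hq' : q = Rh (CB v) := hvq.symm
    have hph' : ph = Rh (CB v') := hv'ph.symm
    have hRhlin : Rh (CB w) = q - ph := by
      apply ext_inner_right ℝ
      intro qh
      rw [hRh, hCB, inner_sub_left, hq', hph', hRh, hRh, hCB, hCB, hw, map_sub]
      simp
    -- ‖q - ph‖² = ⟪CB w, j q - p⟫
    have hsq : ‖q - ph‖ ^ 2 = ⟪CB w, j q - p⟫ := by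
      have h1 : ⟪Rh (CB w), q - ph⟫ = ⟪CB w, j (q - ph)⟫ := hRh _ _
      rw [hRhlin] at h1
      rw [← real_inner_self_eq_norm_sq, h1, map_sub]
      have h2 : ⟪CB w, j q - j ph⟫ = b w (j q) - b w (j ph) := by
        rw [inner_sub_right, hCB, hCB]
      have h3 : ⟪CB w, j q - p⟫ = b w (j q) - b w p := by
        rw [inner_sub_right, hCB, hCB]
      rw [h2, h3, hph w hwVh, hp w]
    -- c * ‖q - ph‖ ≤ ‖p - j q‖
    have hstep : c * ‖q - ph‖ ≤ ‖p - j q‖ := by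
      rcases eq_or_lt_of_le (norm_nonneg (q - ph)) with h0 | h0
      · rw [← h0, mul_zero]; exact norm_nonneg _
      · have hest : ‖q - ph‖ ^ 2 ≤ ‖CB w‖ * ‖p - j q‖ := by
          rw [hsq]
          calc ⟪CB w, j q - p⟫ ≤ ‖CB w‖ * ‖j q - p‖ := real_inner_le_norm _ _
            _ = ‖CB w‖ * ‖p - j q‖ := by rw [norm_sub_rev]
        have hcoer' : c * ‖CB w‖ ≤ ‖q - ph‖ := by
          have := hcoer w hwVh; rwa [hRhlin] at this
        have : c * (‖q - ph‖ ^ 2) ≤ ‖q - ph‖ * ‖p - j q‖ :=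
          calc c * (‖q - ph‖ ^ 2) ≤ c * (‖CB w‖ * ‖p - j q‖) := by
                exact mul_le_mul_of_nonneg_left hest hc.le
            _ = (c * ‖CB w‖) * ‖p - j q‖ := by ring
            _ ≤ ‖q - ph‖ * ‖p - j q‖ :=
                mul_le_mul_of_nonneg_right hcoer' (norm_nonneg _)
        nlinarith [norm_nonneg (q - ph)]
    -- ‖j q - j ph‖ ≤ (1/(c k₁)) ‖p - j q‖
    have hjk : k₁ * ‖j q - j ph‖ ≤ ‖q - ph‖ := by
      have := hnorm (q - ph); rwa [map_sub] at this
    have hmid : c * k₁ * ‖j q - j ph‖ ≤ ‖p - j q‖ := by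
      calc c * k₁ * ‖j q - j ph‖ = c * (k₁ * ‖j q - j ph‖) := by ring
        _ ≤ c * ‖q - ph‖ := mul_le_mul_of_nonneg_left hjk hc.le
        _ ≤ ‖p - j q‖ := hstep
    have hck : (0:ℝ) < c * k₁ := by positivity
    calc ‖p - j ph‖ ≤ ‖p - j q‖ + ‖j q - j ph‖ := by
          have := norm_sub_le_norm_sub_add_norm_sub p (j q) (j ph)
          linarith [norm_add_le (p - j q) (j q - j ph),
            (by abel : (p - j q) + (j q - j ph) = p - j ph)]
      _ ≤ ‖p - j q‖ + (1 / (c * k₁)) * ‖p - j q‖ := by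
          have : ‖j q - j ph‖ ≤ (1 / (c * k₁)) * ‖p - j q‖ := by
            rw [div_mul_eq_mul_div, le_div_iff₀ hck]; linarith
          linarith
      _ = (1 + 1 / (c * k₁)) * ‖p - j q‖ := by ring
  have : Nonempty {q : Mt // q ∈ Mh} := ⟨⟨ph, hphMh⟩⟩
  rw [← div_le_iff₀' hC]
  apply le_ciInf
  intro q
  rw [div_le_iff₀' hC]
  exact key q.1 q.2
end

section
/- In the setting of the projection-type trial space, if Q_h is the Q̃-orthogonal projection onto M_h = R_h C⁻¹ B V_h, and p, p_h are the continuous and discrete solutions, then ‖Q_h p − p_h‖_h ≤ (1/c̃)‖p − Q_h p‖, where c̃ is the coercivity constant of R_h on C⁻¹BV_h. -/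
open RealInnerProductSpace

/-- if `Q_h p` is the `Q̃`-orthogonal projection of `p` onto
`M_h = R_h C⁻¹ B V_h`, then `‖Q_h p − p_h‖_h ≤ (1/c̃) ‖p − Q_h p‖`. -/
theorem stmt7
    {V W Mt : Type*} [NormedAddCommGroup V] [InnerProductSpace ℝ V] [CompleteSpace V]
    [NormedAddCommGroup W] [InnerProductSpace ℝ W] [CompleteSpace W]
    [NormedAddCommGroup Mt] [InnerProductSpace ℝ Mt] [FiniteDimensional ℝ Mt]
    (b : V →L[ℝ] W →L[ℝ] ℝ)
    (j : Mt →ₗ[ℝ] W) (hj : Function.Injective j)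
    (CB : V → W) (hCB : ∀ v : V, ∀ q : W, ⟪CB v, q⟫ = b v q)
    (Rh : W → Mt) (hRh : ∀ p : W, ∀ qh : Mt, ⟪Rh p, qh⟫ = ⟪p, j qh⟫)
    (Vh : Submodule ℝ V) [FiniteDimensional ℝ Vh]
    (c : ℝ) (hc : 0 < c)
    (hcoer : ∀ v ∈ Vh, c * ‖CB v‖ ≤ ‖Rh (CB v)‖)
    (Mh : Set Mt) (hMh : Mh = (fun v => Rh (CB v)) '' (Vh : Set V))
    (p : W) (ph : Mt) (hphMh : ph ∈ Mh)
    (hGalerkin : ∀ v ∈ Vh, b v p = b v (j ph))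
    (Qhp : Mt) (hQhpMh : Qhp ∈ Mh)
    (hproj : ∀ q ∈ Mh, ⟪p - j Qhp, j q⟫ = 0) :
    ‖Qhp - ph‖ ≤ (1 / c) * ‖p - j Qhp‖ := by
  subst hMh
  obtain ⟨v1, hv1, hv1e⟩ := hQhpMh
  obtain ⟨v2, hv2, hv2e⟩ := hphMh
  set w := v1 - v2 with hw
  have hwVh : w ∈ Vh := Vh.sub_mem hv1 hv2
  -- CB is additive on the relevant combination
  have hCBw : CB w = CB v1 - CB v2 := by
    apply ext_inner_right ℝ
    intro q
    rw [inner_sub_left, hCB, hCB, hCB, hw, map_sub]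
    simp
  -- Rh is additive
  have hRhsub : ∀ x y : W, Rh (x - y) = Rh x - Rh y := by
    intro x y
    apply ext_inner_right ℝ
    intro qh
    rw [inner_sub_left, hRh, hRh, hRh, inner_sub_left]
  have hdiff : Qhp - ph = Rh (CB w) := by
    simp only [] at hv1e hv2e; rw [hCBw, hRhsub, ← hv1e, ← hv2e]
  -- key inner product identity
  have hsq : ‖Qhp - ph‖ ^ 2 ≤ ‖CB w‖ * ‖p - j Qhp‖ := by
    have h1 : ‖Qhp - ph‖ ^ 2 = ⟪Rh (CB w), Qhp - ph⟫ := by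
      rw [← hdiff, ← real_inner_self_eq_norm_sq]
    have h2 : ⟪Rh (CB w), Qhp - ph⟫ = ⟪CB w, j Qhp - p⟫ := by
      rw [hRh, map_sub, inner_sub_right, inner_sub_right, hCB, hCB]
      have := hGalerkin w hwVh
      rw [← this, ← hCB, ← hCB]
    have h3 : ⟪CB w, j Qhp - p⟫ ≤ ‖CB w‖ * ‖p - j Qhp‖ := by
      calc ⟪CB w, j Qhp - p⟫ ≤ ‖CB w‖ * ‖j Qhp - p‖ := real_inner_le_norm _ _
        _ = ‖CB w‖ * ‖p - j Qhp‖ := by rw [norm_sub_rev]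
    rw [h1, h2]; exact h3
  have hco : c * ‖CB w‖ ≤ ‖Qhp - ph‖ := by
    rw [hdiff]; exact hcoer w hwVh
  rcases eq_or_lt_of_le (norm_nonneg (Qhp - ph)) with h0 | h0
  · rw [← h0]
    positivity
  · rw [div_mul_eq_mul_div, le_div_iff₀ hc]
    nlinarith [norm_nonneg (p - j Qhp), norm_nonneg (CB w)]
end

section
/- Let R_h : Q̃ → M̃_h satisfy (R_h p, q_h)_h = (p, q_h)_{Q̃} for all q_h ∈ M̃_h, where (·,·)_h is an inner product on M̃_h. If V_h ⊆ V is such that ‖R_h C⁻¹ B v_h‖_h ≥ c̃ ‖C⁻¹ B v_h‖ for all v_h ∈ V_h, then for every v_h in the discrete kernel V_{h,0} (with respect to M_h = R_h C⁻¹ B V_h), we have C⁻¹Bv_h = 0, i.e., Bv_h = 0. -/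
open RealInnerProductSpace

/-- if `‖R_h C⁻¹ B v_h‖_h ≥ c̃ ‖C⁻¹ B v_h‖` on `V_h`, then every
element of the discrete kernel `V_{h,0}` (w.r.t. `M_h = R_h C⁻¹ B V_h`) satisfies
`C⁻¹Bv_h = 0`, i.e. `Bv_h = 0`. -/
theorem stmt14
    {V W Mt : Type*} [NormedAddCommGroup V] [InnerProductSpace ℝ V] [CompleteSpace V]
    [NormedAddCommGroup W] [InnerProductSpace ℝ W] [CompleteSpace W]
    [NormedAddCommGroup Mt] [InnerProductSpace ℝ Mt] [FiniteDimensional ℝ Mt]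
    (b : V →L[ℝ] W →L[ℝ] ℝ)
    (j : Mt →ₗ[ℝ] W) (hj : Function.Injective j)
    (CB : V → W) (hCB : ∀ v : V, ∀ q : W, ⟪CB v, q⟫ = b v q)
    (Rh : W → Mt) (hRh : ∀ p : W, ∀ qh : Mt, ⟪Rh p, qh⟫ = ⟪p, j qh⟫)
    (Vh : Submodule ℝ V)
    (c : ℝ) (hc : 0 < c)
    (hcoer : ∀ v ∈ Vh, c * ‖CB v‖ ≤ ‖Rh (CB v)‖)
    (vh : V) (hvh : vh ∈ Vh)
    (hker : ∀ u ∈ Vh, ⟪CB vh, j (Rh (CB u))⟫ = 0) :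
    CB vh = 0 ∧ ∀ q : W, b vh q = 0 := by
  have h0 : ⟪Rh (CB vh), Rh (CB vh)⟫ = 0 := by
    rw [hRh]; exact hker vh hvh
  have hR0 : Rh (CB vh) = 0 := by
    simpa using inner_self_eq_zero.mp h0
  have h1 : c * ‖CB vh‖ ≤ 0 := by
    simpa [hR0] using hcoer vh hvh
  have h2 : ‖CB vh‖ = 0 := le_antisymm (nonpos_of_mul_nonpos_right h1 hc) (norm_nonneg _)
  have h3 : CB vh = 0 := norm_eq_zero.mp h2
  exact ⟨h3, fun q => by rw [← hCB, h3, inner_zero_left]⟩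
end

section
/- Let B : V → Q* be a bounded linear operator between Hilbert spaces with closed range and C : Q → Q* the Riesz map. Then for any F ∈ V* vanishing on ker B, the problem ⟨B*p, v⟩ = ⟨F, v⟩ for all v ∈ V has a solution p in the closure of C⁻¹B(V), and this solution is unique in that subspace. -/
/-! Let `T : V → W` be the Riesz representative of `b`, so that `CB = T` and `K = range T` is
closed, hence a Hilbert space. As `F` vanishes on `ker T` and `T : V → K` is a surjection of
Banach spaces, `F = g ∘ T` for a bounded functional `g` on `K`, and the Riesz representative
`p ∈ K` of `g` solves the problem. Two solutions in `K` differ by an element of `K` orthogonal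
to `K`, hence agree. -/

open RealInnerProductSpace

namespace ContinuousLinearMap

variable {𝕜 E F G : Type*} [NontriviallyNormedField 𝕜]
  [NormedAddCommGroup E] [NormedSpace 𝕜 E] [CompleteSpace E]
  [NormedAddCommGroup F] [NormedSpace 𝕜 F] [CompleteSpace F]
  [NormedAddCommGroup G] [NormedSpace 𝕜 G]

/-- The factor is continuous because, by the open mapping theorem, a surjection between Banach
spaces is a quotient map. -/
theorem exists_comp_eq_of_surjective_of_ker_le (T : E →L[𝕜] F) (hT : Function.Surjective T)
    (f : E →L[𝕜] G) (hker : T.ker ≤ f.ker) :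
    ∃ g : F →L[𝕜] G, g ∘L T = f := by
  let g : F →ₗ[𝕜] G :=
    T.ker.liftQ f hker ∘ₗ (T.toLinearMap.quotKerEquivOfSurjective hT).symm
  have hg : ∀ x, g (T x) = f x := fun x => by
    have : (T.toLinearMap.quotKerEquivOfSurjective hT).symm (T x) = Submodule.Quotient.mk x :=
      (LinearEquiv.symm_apply_eq _).2 rfl
    simp [g, this]
  have hg_cont : Continuous g :=
    (T.isQuotientMap hT).continuous_iff.2 (by simpa [Function.comp_def, hg] using f.continuous)
  exact ⟨⟨g, hg_cont⟩, ext hg⟩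

end ContinuousLinearMap

section ClosedRange

variable {𝕜 V W : Type*} [RCLike 𝕜] [NormedAddCommGroup W] [InnerProductSpace 𝕜 W]

theorem ContinuousLinearMap.exists_mem_range_inner_eq
    [NormedAddCommGroup V] [NormedSpace 𝕜 V] [CompleteSpace V] [CompleteSpace W]
    (T : V →L[𝕜] W) (hT : IsClosed (Set.range T)) (f : V →L[𝕜] 𝕜)
    (hker : T.ker ≤ f.ker) :
    ∃ p ∈ T.range, ∀ v, inner 𝕜 p (T v) = f v := by
  have : IsClosed (T.range : Set W) := by simpa
  have : CompleteSpace T.range := this.completeSpace_coe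
  obtain ⟨g, hg⟩ := T.rangeRestrict.exists_comp_eq_of_surjective_of_ker_le
    (LinearMap.surjective_rangeRestrict _) f (by simpa using hker)
  refine ⟨(InnerProductSpace.toDual 𝕜 T.range).symm g, Submodule.coe_mem _, fun v => ?_⟩
  have hTv : T v = (T.rangeRestrict v : W) := rfl
  rw [hTv, ← Submodule.coe_inner, InnerProductSpace.toDual_symm_apply, ← hg, comp_apply]

theorem LinearMap.eq_of_mem_range_of_forall_inner_eq [AddCommGroup V] [Module 𝕜 V]
    (T : V →ₗ[𝕜] W) {p p' : W} (hp : p ∈ T.range) (hp' : p' ∈ T.range)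
    (h : ∀ v, inner 𝕜 p (T v) = inner 𝕜 p' (T v)) : p = p' := by
  obtain ⟨v, hv⟩ := T.range.sub_mem hp hp'
  have : inner 𝕜 (p - p') (p - p') = 0 := by rw [inner_sub_left, ← hv, h, sub_self]
  exact sub_eq_zero.1 (inner_self_eq_zero.1 this)

end ClosedRange

/-- for a bounded operator `B : V → Q*` with closed range (encoded by
the closedness of the range of `C⁻¹B : V → Q`) and `F ∈ V*` vanishing on `ker B`,
the equation `⟨B*p, v⟩ = ⟨F, v⟩` for all `v` has a solution `p` in the closure of
`C⁻¹B(V)`, unique in that subspace. -/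
theorem stmt17
    {V W : Type*} [NormedAddCommGroup V] [InnerProductSpace ℝ V] [CompleteSpace V]
    [NormedAddCommGroup W] [InnerProductSpace ℝ W] [CompleteSpace W]
    (b : V →L[ℝ] W →L[ℝ] ℝ)
    (CB : V → W) (hCB : ∀ v : V, ∀ q : W, ⟪CB v, q⟫ = b v q)
    (hclosed : IsClosed (Set.range CB))
    (F : V →L[ℝ] ℝ)
    (hF : ∀ v : V, (∀ q : W, b v q = 0) → F v = 0) :
    ∃ p ∈ closure (Set.range CB), (∀ v : V, b v p = F v) ∧
      ∀ p' ∈ closure (Set.range CB), (∀ v : V, b v p' = F v) → p' = p := by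
  set T : V →L[ℝ] W :=
    (InnerProductSpace.toDual ℝ W).symm.toContinuousLinearEquiv.toContinuousLinearMap ∘L b
  have hT : ∀ v q, b v q = ⟪q, T v⟫ := fun v q => by
    rw [real_inner_comm]; exact InnerProductSpace.toDual_symm_apply.symm
  obtain rfl : CB = T := funext fun v => ext_inner_right ℝ fun q => by rw [hCB, hT, real_inner_comm]
  rw [hclosed.closure_eq]
  have hker : T.ker ≤ F.ker := fun v hv =>
    hF v fun q => by rw [hT, show T v = 0 from hv, inner_zero_right]
  obtain ⟨p, hp, hpF⟩ := T.exists_mem_range_inner_eq hclosed F hker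
  simp only [hT]
  exact ⟨p, hp, hpF, fun p' hp' hp'F =>
    T.toLinearMap.eq_of_mem_range_of_forall_inner_eq hp' hp fun v => (hp'F v).trans (hpF v).symm⟩
end
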